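/- There exists a group homomorphism ϑ : Γ₁(2) → ℂˣ with ϑ([[1,0],[-2,1]]) = ϑ([[1,1],[0,1]]) = exp(πi/4); moreover ϑ⁸ is the trivial character and ϑ⁴ takes the value -1 on both generators. -/
import Mathlib


open Matrix

/-- `A = [[1,0],[-2,1]]` in `SL(2, ℤ)`. -/
def A : Matrix.SpecialLinearGroup (Fin 2) ℤ :=
  ⟨!![1, 0; -2, 1], by norm_num [Matrix.det_fin_two_of]⟩

/-- `B = [[1,1],[0,1]]` in `SL(2, ℤ)`. -/
def B : Matrix.SpecialLinearGroup (Fin 2) ℤ :=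
  ⟨!![1, 1; 0, 1], by norm_num [Matrix.det_fin_two_of]⟩

theorem A_mem_Gamma1_two : A ∈ CongruenceSubgroup.Gamma1 2 := by
  rw [CongruenceSubgroup.Gamma1_mem]; refine ⟨?_, ?_, ?_⟩ <;> decide

theorem B_mem_Gamma1_two : B ∈ CongruenceSubgroup.Gamma1 2 := by
  rw [CongruenceSubgroup.Gamma1_mem]; refine ⟨?_, ?_, ?_⟩ <;> decide

/-- The exponent polynomial: `Gp a b c = 2ab - ac + 4a - 4 + a² - 1`. -/
def Gp (p q r : ℤ) : ℤ := 2*p*q - p*r + 4*p - 4 + p^2 - 1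

/-- Key divisibility: the defect of `Gp` under matrix multiplication is divisible by 16. -/
lemma key_dvd (x b y d u v w D : ℤ)
    (h1 : (2*x+1)*d - b*(2*y) = 1) (h2 : (2*u+1)*D - v*(2*w) = 1) :
    (16:ℤ) ∣ (Gp ((2*x+1)*(2*u+1)+b*(2*w)) ((2*x+1)*v+b*D) ((2*y)*(2*u+1)+d*(2*w))
        - Gp (2*x+1) b (2*y) - Gp (2*u+1) v (2*w)) := by
  obtain ⟨k1, e1⟩ := Int.even_mul_succ_self x
  obtain ⟨k2, e2⟩ := Int.even_mul_succ_self u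
  obtain ⟨k3, e3⟩ := Int.even_mul_succ_self w
  obtain ⟨k4, e4⟩ := Int.even_mul_succ_self (b-1)
  obtain ⟨k5, e5⟩ := Int.even_mul_succ_self (b*w)
  obtain ⟨k6, e6⟩ := Int.even_mul_succ_self b
  have hc2 : IsCoprime (2:ℤ) ((2*x+1)*(2*u+1)) :=
    IsCoprime.mul_right ⟨-x, 1, by ring⟩ ⟨-u, 1, by ring⟩
  have hcop : IsCoprime (16:ℤ) ((2*x+1)*(2*u+1)) := by
    have h4 : IsCoprime ((2:ℤ)^4) ((2*x+1)*(2*u+1)) := hc2.pow_left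
    norm_num at h4
    exact h4
  refine hcop.dvd_of_dvd_mul_left ?_
  refine ⟨(-1)*y*u + (-2)*y*u^2 + (-1)*y*u^3 + b*w + 2*b*u*w + (-1)*b*u*w^2 + b*u*v*w
    + b*u^2*w + (-1)*b*y*w + (-2)*b*y*u*w + (-2)*b*y*u^2*w + (-1)*b^2*y*w^2
    + (-1)*b^2*y*u*w^2 + 2*x*u + 2*x*u*v + 5*x*u^2 + 2*x*u^2*v + 2*x*u^3 + (-2)*x*y*u
    + (-6)*x*y*u^2 + (-4)*x*y*u^3 + 2*x*b*w + 2*x*b*v*w + 6*x*b*u*w + 4*x*b*u*v*w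
    + 4*x*b*u^2*w + (-1)*x*b*y*w + (-4)*x*b*y*u*w + (-4)*x*b*y*u^2*w + x*b^2*v*w^2
    + x*b^2*u*w^2 + x^2*v + 5*x^2*u + 6*x^2*u*v + 13*x^2*u^2 + 6*x^2*u^2*v + 6*x^2*u^3
    + (-2)*x^2*y*u + (-6)*x^2*y*u^2 + (-4)*x^2*y*u^3 + x^2*b*w + 2*x^2*b*v*w
    + 4*x^2*b*u*w + 4*x^2*b*u*v*w + 4*x^2*b*u^2*w + x^3*v + 2*x^3*u + 4*x^3*u*v
    + 6*x^3*u^2 + 4*x^3*u^2*v + 4*x^3*u^3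
    + y*k2 + v*k1 + u*w^2*k6 + (y+v)*k5 + k3*k4 + x*b^2*k3, ?_⟩
  unfold Gp
  linear_combination
    ((-2)*w + (-8)*u*w + (-8)*u^2*w + (-4)*b*w^2 + (-8)*b*u*w^2 + (-4)*x*w
      + (-16)*x*u*w + (-16)*x*u^2*w) * h1
    + (2*b + 4*b*u + 4*b^2*w + 8*x*b + 16*x*b*u + 8*x*b^2*w + 8*x^2*b + 16*x^2*b*u) * h2
    + (8*y) * e2 + (8*v) * e1 + (8*u*w^2) * e6 + (8*(y+v)) * e5
    + (4*(w^2+w)) * e4 + (8*k4 + 8*x*b^2) * e3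

/-- The exponent function on `SL(2, ℤ)`. -/
def Gm (g : Matrix.SpecialLinearGroup (Fin 2) ℤ) : ℤ := Gp (g 0 0) (g 0 1) (g 1 0)

noncomputable def ζ8 : ℂˣ :=
  Units.mk0 (Complex.exp (Real.pi * Complex.I / 8)) (Complex.exp_ne_zero _)

lemma ζ8_pow_16 : ζ8 ^ (16:ℤ) = 1 := by
  rw [show (16:ℤ) = ((16:ℕ):ℤ) from rfl, zpow_natCast]
  ext
  rw [Units.val_pow_eq_pow_val]
  show Complex.exp (Real.pi * Complex.I / 8) ^ (16:ℕ) = 1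
  rw [← Complex.exp_nat_mul,
    show ((16:ℕ):ℂ) * (Real.pi * Complex.I / 8) = 2 * Real.pi * Complex.I by push_cast; ring]
  exact Complex.exp_two_pi_mul_I

/-- Membership data: odd diagonal-ish entries and even lower-left entry. -/
lemma mem_data {g : Matrix.SpecialLinearGroup (Fin 2) ℤ}
    (hg : g ∈ CongruenceSubgroup.Gamma1 2) :
    ∃ x y : ℤ, g 0 0 = 2*x+1 ∧ g 1 0 = 2*y := by
  rw [CongruenceSubgroup.Gamma1_mem] at hg
  obtain ⟨h00, _, h10⟩ := hg
  have hx : (2:ℤ) ∣ (g 0 0 - 1) := by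
    have : ((g 0 0 - 1 : ℤ) : ZMod 2) = 0 := by push_cast [h00]; ring
    exact (ZMod.intCast_zmod_eq_zero_iff_dvd _ 2).mp this
  have hy : (2:ℤ) ∣ (g 1 0) := (ZMod.intCast_zmod_eq_zero_iff_dvd _ 2).mp h10
  obtain ⟨x, hx⟩ := hx
  obtain ⟨y, hy⟩ := hy
  exact ⟨x, y, by omega, hy⟩

lemma det_data (g : Matrix.SpecialLinearGroup (Fin 2) ℤ) :
    g 0 0 * g 1 1 - g 0 1 * g 1 0 = 1 := by
  have := g.2
  rwa [Matrix.det_fin_two] at this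

lemma Gm_mul {g h : Matrix.SpecialLinearGroup (Fin 2) ℤ}
    (hg : g ∈ CongruenceSubgroup.Gamma1 2) (hh : h ∈ CongruenceSubgroup.Gamma1 2) :
    (16:ℤ) ∣ Gm (g * h) - Gm g - Gm h := by
  obtain ⟨x, y, hgx, hgy⟩ := mem_data hg
  obtain ⟨u, w, hhu, hhw⟩ := mem_data hh
  have hdg := det_data g
  have hdh := det_data h
  rw [hgx, hgy] at hdg
  rw [hhu, hhw] at hdh
  have h1 : (2*x+1) * g.1 1 1 - g.1 0 1 * (2*y) = 1 := hdg
  have h2 : (2*u+1) * h.1 1 1 - h.1 0 1 * (2*w) = 1 := hdh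
  have := key_dvd x (g 0 1) y (g 1 1) u (h 0 1) w (h 1 1) h1 h2
  have hmul : ∀ i j, (g * h) i j = g i 0 * h 0 j + g i 1 * h 1 j := by
    intro i j
    simp [Matrix.SpecialLinearGroup.coe_mul, Matrix.mul_apply, Fin.sum_univ_two]
  unfold Gm
  rw [hmul 0 0, hmul 0 1, hmul 1 0, hgx, hgy, hhu, hhw]
  convert this using 2

/-- The character `ϑ` on `Γ₁(2)`. -/
noncomputable def theta : (CongruenceSubgroup.Gamma1 2) →* ℂˣ where
  toFun g := ζ8 ^ (Gm g.1)
  map_one' := by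
    have h : Gm (1 : Matrix.SpecialLinearGroup (Fin 2) ℤ) = 0 := by
      unfold Gm Gp
      norm_num [Matrix.SpecialLinearGroup.coe_one, Matrix.one_apply]
    show ζ8 ^ Gm ((1 : CongruenceSubgroup.Gamma1 2) : Matrix.SpecialLinearGroup (Fin 2) ℤ) = 1
    rw [OneMemClass.coe_one, h, zpow_zero]
  map_mul' g h := by
    obtain ⟨k, hk⟩ := Gm_mul g.2 h.2
    have hG : Gm (g.1 * h.1) = Gm g.1 + Gm h.1 + 16 * k := by linarith
    show ζ8 ^ (Gm (g.1 * h.1)) = ζ8 ^ (Gm g.1) * ζ8 ^ (Gm h.1)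
    rw [hG, _root_.zpow_add, _root_.zpow_add, _root_.zpow_mul, ζ8_pow_16, _root_.one_zpow, mul_one]

lemma Gm_A : Gm A = 2 := by unfold Gm Gp A; norm_num
lemma Gm_B : Gm B = 2 := by unfold Gm Gp B; norm_num

lemma theta_val (g : CongruenceSubgroup.Gamma1 2) : theta g = ζ8 ^ (Gm g.1) := rfl

/-- There is a character `ϑ : Γ₁(2) → ℂˣ` with `ϑ(A) = ϑ(B) = exp(πi/4)`;
`ϑ⁸` is trivial and `ϑ⁴` takes the value `-1` on both generators. -/
theorem exists_character_Gamma1_two :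
    ∃ ϑ : (CongruenceSubgroup.Gamma1 2) →* ℂˣ,
      (ϑ ⟨A, A_mem_Gamma1_two⟩ : ℂ) = Complex.exp (Real.pi * Complex.I / 4) ∧
      (ϑ ⟨B, B_mem_Gamma1_two⟩ : ℂ) = Complex.exp (Real.pi * Complex.I / 4) ∧
      (∀ g, (ϑ g) ^ 8 = 1) ∧
      ((ϑ ⟨A, A_mem_Gamma1_two⟩ : ℂ) ^ 4 = -1) ∧
      ((ϑ ⟨B, B_mem_Gamma1_two⟩ : ℂ) ^ 4 = -1) := by
  have hval2 : ((ζ8 ^ (2:ℤ) : ℂˣ) : ℂ) = Complex.exp (Real.pi * Complex.I / 4) := by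
    rw [show (2:ℤ) = ((2:ℕ):ℤ) from rfl, zpow_natCast, Units.val_pow_eq_pow_val]
    show Complex.exp (Real.pi * Complex.I / 8) ^ (2:ℕ) = _
    rw [← Complex.exp_nat_mul,
      show ((2:ℕ):ℂ) * (Real.pi * Complex.I / 8) = Real.pi * Complex.I / 4 by push_cast; ring]
  have hA8 : ((ζ8 ^ (2:ℤ) : ℂˣ) : ℂ) ^ 4 = -1 := by
    rw [hval2, ← Complex.exp_nat_mul,
      show ((4:ℕ):ℂ) * (Real.pi * Complex.I / 4) = Real.pi * Complex.I by push_cast; ring]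
    exact Complex.exp_pi_mul_I
  refine ⟨theta, ?_, ?_, ?_, ?_, ?_⟩
  · show ((ζ8 ^ (Gm A) : ℂˣ) : ℂ) = _
    rw [Gm_A]; exact hval2
  · show ((ζ8 ^ (Gm B) : ℂˣ) : ℂ) = _
    rw [Gm_B]; exact hval2
  · intro g
    obtain ⟨x, y, hx, hy⟩ := mem_data g.2
    have heven : Gm g.1 = 2 * ((2*x+1) * (g.1 0 1) - (2*x+1)*y + 6*x + 2*x^2) := by
      unfold Gm Gp
      rw [hx, hy]
      ring
    set m : ℤ := (2*x+1) * (g.1 0 1) - (2*x+1)*y + 6*x + 2*x^2 with hm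
    rw [theta_val, heven, ← zpow_natCast (ζ8 ^ (2*m)) 8, ← _root_.zpow_mul,
      show (2*m) * ((8:ℕ):ℤ) = 16 * m by push_cast; ring,
      _root_.zpow_mul, ζ8_pow_16, _root_.one_zpow]
  · show ((ζ8 ^ (Gm A) : ℂˣ) : ℂ) ^ 4 = -1
    rw [Gm_A]; exact hA8
  · show ((ζ8 ^ (Gm B) : ℂˣ) : ℂ) ^ 4 = -1
    rw [Gm_B]; exact hA8
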